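/- Superasymptotic (optimally truncated perturbative) expansion: there exist constants C > 0 and δ > 0 such that for all real λ with 0 < λ < δ, taking n(λ) := ⌊3/(2λ)⌋, one has |Z(λ) − Σ_{k=0}^{n(λ)−1} u_k(λ)| ≤ C e^{−3/(2λ)}. That is, truncating the divergent perturbative series of Z(λ) at index proportional to 1/λ (with optimal constant 3/2) leaves an exponentially small remainder. -/

import Mathlib

open MeasureTheory

noncomputable section

/-- The partition function of zero-dimensional φ⁴ theory. -/
def Z (lam : ℝ) : ℝ :=
  (1 / Real.sqrt (2 * Real.pi)) * ∫ φ : ℝ, Real.exp (-φ ^ 2 / 2 - (lam / 24) * φ ^ 4)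

/-- The k-th term of the perturbative expansion of `Z`. -/
def u (k : ℕ) (lam : ℝ) : ℝ :=
  (1 / Real.sqrt Real.pi) * ((-1) ^ k / (Nat.factorial k : ℝ)) *
    Real.Gamma (1 / 2 + 2 * k) * (lam / 6) ^ k

/-!
`Z(λ)` is the Gaussian average of `exp (-λφ⁴/24)` and `u_k(λ)` is the Gaussian average of the
`k`-th Taylor term of that exponential. For `w ≥ 0` the Taylor series of `exp (-w)` is alternating,
`|exp (-w) - ∑_{k<n} (-w)ᵏ/k!| ≤ wⁿ/n!`, so after averaging, the error of the `n`-term truncation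
is at most the first omitted term `|u_n(λ)|`. Log-convexity of `Γ` gives
`Γ(2n + 1/2) ≤ (2n)!/√(2n)`; with `(2n)! ≤ 4ⁿ (n!)²` and the Stirling bound `n! ≤ e √n (n/e)ⁿ`
this yields `|u_n(λ)| ≤ e/√(2π) · (2λn/(3e))ⁿ`. For `n = ⌊3/(2λ)⌋` the base is at most `1/e`,
so `|u_n(λ)| ≤ e/√(2π) · e⁻ⁿ ≤ e²/√(2π) · e^{-3/(2λ)}`.
-/

open Real Finset Set
open scoped Nat

theorem hasDerivAt_pow_succ_div_factorial (n : ℕ) (y : ℝ) :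
    HasDerivAt (fun y : ℝ => y ^ (n + 1) / (n + 1)!) (y ^ n / n !) y := by
  refine ((hasDerivAt_pow (n + 1) y).div_const _).congr_deriv ?_
  rw [Nat.factorial_succ]
  push_cast
  field_simp

theorem hasDerivAt_sum_range_pow_div_factorial (n : ℕ) (y : ℝ) :
    HasDerivAt (fun y : ℝ => ∑ k ∈ range (n + 1), y ^ k / k !)
      (∑ k ∈ range n, y ^ k / k !) y := by
  induction n with
  | zero => simpa using hasDerivAt_const y (1 : ℝ)
  | succ n ih =>
    simp only [sum_range_succ _ (n + 1)]
    exact (ih.add (hasDerivAt_pow_succ_div_factorial n y)).congr_deriv (sum_range_succ _ _).symm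

theorem Real.abs_exp_neg_sub_sum_le {x : ℝ} (hx : 0 ≤ x) (n : ℕ) :
    |exp (-x) - ∑ k ∈ range n, (-x) ^ k / k !| ≤ x ^ n / n ! := by
  induction n generalizing x with
  | zero => simpa [abs_of_pos (exp_pos _)] using hx
  | succ n ih =>
    have hderiv (y : ℝ) : HasDerivAt (fun y => exp (-y) - ∑ k ∈ range (n + 1), (-y) ^ k / k !)
        (-(exp (-y) - ∑ k ∈ range n, (-y) ^ k / k !)) y := by
      refine ((hasDerivAt_neg y).exp.sub ((hasDerivAt_sum_range_pow_div_factorial n (-y)).comp y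
        (hasDerivAt_neg y))).congr_deriv ?_
      ring
    exact image_norm_le_of_norm_deriv_right_le_deriv_boundary (a := 0)
      (fun y _ => (hderiv y).continuousAt.continuousWithinAt)
      (fun y _ => (hderiv y).hasDerivWithinAt) (by simp [sum_range_succ'])
      (hasDerivAt_pow_succ_div_factorial n)
      (fun y hy => by simpa only [norm_neg, Real.norm_eq_abs] using ih hy.1) ⟨hx, le_rfl⟩

theorem integrable_pow_mul_exp_neg_mul_sq {b : ℝ} (hb : 0 < b) (n : ℕ) :
    Integrable fun x : ℝ => x ^ n * exp (-b * x ^ 2) := by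
  simpa [rpow_natCast] using
    integrable_rpow_mul_exp_neg_mul_sq hb (s := n) (by linarith [n.cast_nonneg (α := ℝ)])

theorem integral_pow_two_mul_mul_exp_neg_mul_sq {b : ℝ} (hb : 0 < b) (m : ℕ) :
    ∫ x : ℝ, x ^ (2 * m) * exp (-b * x ^ 2) = b ^ (-(m + 1 / 2 : ℝ)) * Gamma (m + 1 / 2) := by
  have heven := integral_comp_abs (f := fun x : ℝ => x ^ (2 * m) * exp (-b * x ^ 2))
  simp only [pow_mul, sq_abs] at heven
  have hhalf : ∫ x in Ioi (0 : ℝ), (x ^ 2) ^ m * exp (-b * x ^ 2)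
      = ∫ x in Ioi (0 : ℝ), x ^ (2 * m : ℝ) * exp (-b * x ^ (2 : ℝ)) := by
    refine setIntegral_congr_fun measurableSet_Ioi fun x _ => ?_
    norm_cast
    rw [pow_mul]
  simp_rw [pow_mul]
  rw [heven, hhalf,
    integral_rpow_mul_exp_neg_mul_rpow two_pos (by linarith [m.cast_nonneg (α := ℝ)]) hb]
  ring_nf

theorem integrable_exp_neg_sq_div_two_mul_pow_four_pow (c : ℝ) (k : ℕ) :
    Integrable fun x : ℝ => exp (-x ^ 2 / 2) * ((c * x ^ 4) ^ k / k !) := by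
  refine ((integrable_pow_mul_exp_neg_mul_sq (b := 1 / 2) (by norm_num) (4 * k)).const_mul
    (c ^ k / k !)).congr (ae_of_all _ fun x => ?_)
  simp only [pow_mul, mul_pow]
  ring_nf

theorem integrable_exp_neg_sq_div_two_sub_mul_pow_four {c : ℝ} (hc : 0 ≤ c) :
    Integrable fun x : ℝ => exp (-x ^ 2 / 2 - c * x ^ 4) := by
  refine (integrable_exp_neg_mul_sq (b := 1 / 2) (by norm_num)).mono'
    (by fun_prop : Continuous _).aestronglyMeasurable (ae_of_all _ fun x => ?_)
  rw [norm_of_nonneg (exp_pos _).le, exp_le_exp]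
  nlinarith [mul_nonneg hc (pow_nonneg (sq_nonneg x) 2)]

theorem u_eq_integral (k : ℕ) (lam : ℝ) :
    u k lam = 1 / √(2 * π) * ∫ x, exp (-x ^ 2 / 2) * ((-(lam / 24) * x ^ 4) ^ k / k !) := by
  have hscale : (1 / 2 : ℝ) ^ (-((2 * k : ℕ) + 1 / 2 : ℝ)) = 4 ^ k * √2 := by
    rw [one_div, inv_rpow zero_le_two, ← rpow_neg zero_le_two, neg_neg, rpow_add two_pos,
      rpow_natCast, pow_mul, sqrt_eq_rpow]
    norm_num
  have hintegrand : (fun x : ℝ => exp (-x ^ 2 / 2) * ((-(lam / 24) * x ^ 4) ^ k / k !))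
      = fun x => (-(lam / 24)) ^ k / k ! * (x ^ (2 * (2 * k)) * exp (-(1 / 2) * x ^ 2)) := by
    ext x
    rw [← mul_assoc 2 2, pow_mul, mul_pow]
    ring_nf
  have hcoeff : (-(lam / 24)) ^ k = (-1) ^ k * (lam / 6) ^ k / 4 ^ k := by
    rw [eq_div_iff (by positivity), ← mul_pow, ← mul_pow]
    ring_nf
  rw [hintegrand, integral_const_mul,
    integral_pow_two_mul_mul_exp_neg_mul_sq (by norm_num) (2 * k), hscale, hcoeff, u,
    sqrt_mul zero_le_two]
  push_cast
  rw [add_comm (2 * (k : ℝ))]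
  field_simp

theorem Z_sub_sum_u_eq_integral {lam : ℝ} (hlam : 0 ≤ lam) (n : ℕ) :
    Z lam - ∑ k ∈ range n, u k lam = 1 / √(2 * π) * ∫ x, exp (-x ^ 2 / 2) *
      (exp (-(lam / 24) * x ^ 4) - ∑ k ∈ range n, (-(lam / 24) * x ^ 4) ^ k / k !) := by
  have hterm (k : ℕ) := integrable_exp_neg_sq_div_two_mul_pow_four_pow (-(lam / 24)) k
  have hsplit : (fun x => exp (-x ^ 2 / 2 - lam / 24 * x ^ 4)
        - ∑ k ∈ range n, exp (-x ^ 2 / 2) * ((-(lam / 24) * x ^ 4) ^ k / k !))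
      = fun x => exp (-x ^ 2 / 2) *
        (exp (-(lam / 24) * x ^ 4) - ∑ k ∈ range n, (-(lam / 24) * x ^ 4) ^ k / k !) := by
    ext x
    rw [mul_sub, mul_sum, ← exp_add, neg_mul, ← sub_eq_add_neg]
  rw [← hsplit, integral_sub (integrable_exp_neg_sq_div_two_sub_mul_pow_four (by positivity))
    (integrable_finsetSum _ fun k _ => hterm k), integral_finsetSum _ fun k _ => hterm k,
    mul_sub, mul_sum, Z]
  simp only [u_eq_integral]

theorem abs_u_eq_integral {lam : ℝ} (hlam : 0 ≤ lam) (n : ℕ) :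
    |u n lam| = 1 / √(2 * π) * ∫ x, exp (-x ^ 2 / 2) * ((lam / 24 * x ^ 4) ^ n / n !) := by
  have hsign (x : ℝ) : exp (-x ^ 2 / 2) * ((-(lam / 24) * x ^ 4) ^ n / n !)
      = (-1) ^ n * (exp (-x ^ 2 / 2) * ((lam / 24 * x ^ 4) ^ n / n !)) := by
    rw [neg_mul, neg_pow]
    ring
  rw [u_eq_integral]
  simp only [hsign, integral_const_mul]
  rw [mul_left_comm, abs_mul, abs_neg_one_pow, one_mul, abs_of_nonneg (by positivity)]

theorem abs_Z_sub_sum_u_le {lam : ℝ} (hlam : 0 ≤ lam) (n : ℕ) :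
    |Z lam - ∑ k ∈ range n, u k lam| ≤ |u n lam| := by
  rw [Z_sub_sum_u_eq_integral hlam, abs_u_eq_integral hlam, abs_mul, abs_of_pos (by positivity),
    ← norm_eq_abs]
  gcongr
  refine norm_integral_le_of_norm_le
    (integrable_exp_neg_sq_div_two_mul_pow_four_pow (lam / 24) n) (ae_of_all _ fun x => ?_)
  rw [norm_mul, norm_of_nonneg (exp_pos _).le, neg_mul]
  exact mul_le_mul_of_nonneg_left (abs_exp_neg_sub_sum_le (by positivity) n) (exp_pos _).le

theorem Real.Gamma_add_half_le {x : ℝ} (hx : 0 < x) : Gamma (x + 1 / 2) ≤ √x * Gamma x := by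
  have hconv := Gamma_mul_add_mul_le_rpow_Gamma_mul_rpow_Gamma hx (by linarith : 0 < x + 1)
    one_half_pos one_half_pos (add_halves 1)
  have hΓ := (Gamma_pos_of_pos hx).le
  rw [show 1 / 2 * x + 1 / 2 * (x + 1) = x + 1 / 2 by ring, Gamma_add_one hx.ne', ← sqrt_eq_rpow,
    ← sqrt_eq_rpow, ← sqrt_mul hΓ, show Gamma x * (x * Gamma x) = x * Gamma x ^ 2 by ring,
    sqrt_mul hx.le, sqrt_sq hΓ] at hconv
  exact hconv

theorem Nat.factorial_two_mul_le_four_pow_mul_sq (n : ℕ) : (2 * n)! ≤ 4 ^ n * n ! ^ 2 := by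
  rw [← Nat.choose_mul_factorial_mul_factorial (by omega : n ≤ 2 * n),
    show 2 * n - n = n by omega, ← Nat.centralBinom_eq_two_mul_choose, mul_assoc, ← sq]
  exact Nat.mul_le_mul_right _ (Nat.centralBinom_le_four_pow n)

theorem Stirling.factorial_le_exp_one_mul_sqrt_mul_pow {n : ℕ} (hn : n ≠ 0) :
    (n ! : ℝ) ≤ exp 1 * √n * (n / exp 1) ^ n := by
  obtain ⟨m, rfl⟩ := Nat.exists_eq_succ_of_ne_zero hn
  have h : stirlingSeq (m + 1) ≤ exp 1 / √2 := by
    simpa using stirlingSeq'_antitone (Nat.zero_le m)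
  rw [stirlingSeq, div_le_iff₀ (by positivity)] at h
  refine h.trans_eq ?_
  rw [sqrt_mul zero_le_two]
  field_simp

theorem abs_u_eq {lam : ℝ} (hlam : 0 ≤ lam) (n : ℕ) :
    |u n lam| = (lam / 6) ^ n * Gamma (2 * n + 1 / 2) / (√π * n !) := by
  have hsign : u n lam = (-1) ^ n * ((lam / 6) ^ n * Gamma (2 * n + 1 / 2) / (√π * n !)) := by
    rw [u, add_comm]
    ring
  have hΓ := Gamma_pos_of_pos (by positivity : (0 : ℝ) < 2 * n + 1 / 2)
  rw [hsign, abs_mul, abs_neg_one_pow, one_mul, abs_of_nonneg (by positivity)]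

theorem abs_u_le {n : ℕ} (hn : n ≠ 0) {lam : ℝ} (hlam : 0 ≤ lam) :
    |u n lam| ≤ exp 1 / √(2 * π) * (2 * lam * n / (3 * exp 1)) ^ n := by
  have hGamma : Gamma (2 * n + 1 / 2) ≤ (2 * n)! / √(2 * n) := by
    have hfactorial : ((2 * n)! : ℝ) = 2 * n * Gamma (2 * n) := by
      rw [← Gamma_add_one (by positivity), ← Gamma_nat_eq_factorial]
      push_cast
      ring_nf
    rw [hfactorial, mul_div_right_comm, div_sqrt]
    exact Gamma_add_half_le (by positivity)
  have hcentral : ((2 * n)! : ℝ) ≤ 4 ^ n * n ! ^ 2 := by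
    exact_mod_cast Nat.factorial_two_mul_le_four_pow_mul_sq n
  calc |u n lam| = (lam / 6) ^ n * Gamma (2 * n + 1 / 2) / (√π * n !) := abs_u_eq hlam n
    _ ≤ (lam / 6) ^ n * ((2 * n)! / √(2 * n)) / (√π * n !) := by gcongr
    _ ≤ (lam / 6) ^ n * (4 ^ n * n ! ^ 2 / √(2 * n)) / (√π * n !) := by gcongr
    _ = (2 * lam / 3) ^ n * n ! / (√(2 * π) * √n) := by
      rw [sqrt_mul zero_le_two, sqrt_mul zero_le_two,
        show 2 * lam / 3 = lam / 6 * 4 by ring, mul_pow]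
      field_simp
    _ ≤ (2 * lam / 3) ^ n * (exp 1 * √n * (n / exp 1) ^ n) / (√(2 * π) * √n) := by
      gcongr
      exact Stirling.factorial_le_exp_one_mul_sqrt_mul_pow hn
    _ = exp 1 / √(2 * π) * (2 * lam * n / (3 * exp 1)) ^ n := by
      field_simp
      ring

theorem abs_u_floor_le {lam : ℝ} (hlam : 0 < lam) (hlam' : lam < 3 / 2) :
    |u ⌊3 / (2 * lam)⌋₊ lam| ≤ exp 1 ^ 2 / √(2 * π) * exp (-3 / (2 * lam)) := by
  set t := 3 / (2 * lam) with ht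
  set n := ⌊t⌋₊
  have hn : n ≠ 0 := (Nat.floor_pos.2 (by rw [ht, le_div_iff₀ (by positivity)]; linarith)).ne'
  have hnt : (n : ℝ) ≤ t := Nat.floor_le (by positivity)
  have hratio : 2 * lam * n / (3 * exp 1) = n / t * (exp 1)⁻¹ := by
    rw [ht]
    field_simp
  have hpow : (n / t * (exp 1)⁻¹) ^ n ≤ exp 1 * exp (-t) := by
    calc (n / t * (exp 1)⁻¹) ^ n ≤ ((exp 1)⁻¹) ^ n := by
          gcongr
          exact mul_le_of_le_one_left (by positivity) (div_le_one_of_le₀ hnt (by positivity))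
      _ = exp (-n) := by rw [← exp_neg, ← exp_nat_mul, mul_neg_one]
      _ ≤ exp (1 + -t) := exp_le_exp.2 (by linarith [Nat.lt_floor_add_one t])
      _ = exp 1 * exp (-t) := exp_add _ _
  calc |u n lam| ≤ exp 1 / √(2 * π) * (2 * lam * n / (3 * exp 1)) ^ n := abs_u_le hn hlam.le
    _ ≤ exp 1 / √(2 * π) * (exp 1 * exp (-t)) := by rw [hratio]; gcongr
    _ = exp 1 ^ 2 / √(2 * π) * exp (-3 / (2 * lam)) := by rw [ht, neg_div]; ring

/-- Superasymptotic expansion: truncating the perturbative series of `Z(λ)` at the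
optimal index `⌊3/(2λ)⌋` leaves an exponentially small remainder. -/
theorem superasymptotic_expansion :
    ∃ C > (0 : ℝ), ∃ δ > (0 : ℝ), ∀ lam : ℝ, 0 < lam → lam < δ →
      |Z lam - ∑ k ∈ Finset.range ⌊3 / (2 * lam)⌋₊, u k lam| ≤
        C * Real.exp (-3 / (2 * lam)) :=
  ⟨exp 1 ^ 2 / √(2 * π), by positivity, 3 / 2, by norm_num, fun _ hlam hlam' =>
    (abs_Z_sub_sum_u_le hlam.le _).trans (abs_u_floor_le hlam hlam')⟩

end
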